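/- Every Lagrangian subspace L of R^{2n} is the graph over the coordinate Lagrangian subspace spanned by {x_i : i ∈ I} ∪ {ξ_j : j ∈ J} for some partition {1,...,n} = I ⊔ J; that is, the charts U_{I,J} of symmetric matrices cover the Lagrangian Grassmannian Λ(n). -/
import Mathlib


noncomputable section

/-- The standard symplectic form `Σ dξᵢ∧dxᵢ` on `ℝ^{2n}`. -/
def sympForm (n : ℕ) (u v : (Fin n ⊕ Fin n) → ℝ) : ℝ :=
  ∑ i : Fin n, (u (Sum.inr i) * v (Sum.inl i) - u (Sum.inl i) * v (Sum.inr i))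

/-- A Lagrangian subspace: an `n`-dimensional subspace on which the symplectic form
vanishes identically. -/
def IsLagrangian (n : ℕ) (L : Submodule ℝ ((Fin n ⊕ Fin n) → ℝ)) : Prop :=
  Module.finrank ℝ L = n ∧ ∀ u ∈ L, ∀ v ∈ L, sympForm n u v = 0

/-- Projection onto the coordinate Lagrangian subspace spanned by
`{xᵢ : i ∈ I} ∪ {ξⱼ : j ∉ I}`. -/
def coordProj (n : ℕ) (I : Finset (Fin n)) (v : (Fin n ⊕ Fin n) → ℝ) : Fin n → ℝ :=
  fun i => if i ∈ I then v (Sum.inl i) else v (Sum.inr i)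

/-- Auxiliary: every subspace `W ⊆ ℝⁿ` admits a coordinate set `I` such that the
projection onto the `I`-coordinates is injective on `W` and surjective onto `ℝ^I`. -/
lemma exists_good_coords (n : ℕ) (W : Submodule ℝ (Fin n → ℝ)) :
    ∃ I : Finset (Fin n),
      (∀ u ∈ W, (∀ i ∈ I, u i = 0) → u = 0) ∧
      (∀ c : Fin n → ℝ, ∃ u ∈ W, ∀ i ∈ I, u i = c i) := by
  classical
  set P : Finset (Fin n) → Prop := fun I => ∀ u ∈ W, (∀ i ∈ I, u i = 0) → u = 0 with hP
  have hex : ∃ k : ℕ, ∃ I : Finset (Fin n), P I ∧ I.card = k := by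
    refine ⟨(Finset.univ : Finset (Fin n)).card, Finset.univ, ?_, rfl⟩
    intro u _ h
    funext i
    exact h i (Finset.mem_univ i)
  obtain ⟨I, hPI, hIcard⟩ := Nat.find_spec hex
  have hdelta : ∀ i0 ∈ I, ∃ u ∈ W, ∀ i ∈ I, u i = if i = i0 then 1 else 0 := by
    intro i0 hi0
    by_contra hcon
    push_neg at hcon
    have hP' : P (I.erase i0) := by
      intro u hu h
      have hu0 : u i0 = 0 := by
        by_contra hne
        obtain ⟨i, hi, hih⟩ := hcon ((u i0)⁻¹ • u) (W.smul_mem _ hu)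
        apply hih
        by_cases hii : i = i0
        · subst hii
          simp [Pi.smul_apply, inv_mul_cancel₀ hne]
        · simp [Pi.smul_apply, hii, h i (Finset.mem_erase.mpr ⟨hii, hi⟩)]
      apply hPI u hu
      intro i hi
      by_cases hii : i = i0
      · subst hii; exact hu0
      · exact h i (Finset.mem_erase.mpr ⟨hii, hi⟩)
    have h1 : Nat.find hex ≤ (I.erase i0).card := Nat.find_min' hex ⟨_, hP', rfl⟩
    have h2 : (I.erase i0).card < I.card := Finset.card_erase_lt_of_mem hi0
    omega
  refine ⟨I, hPI, ?_⟩
  intro c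
  choose! u hu hud using hdelta
  refine ⟨∑ i ∈ I, c i • u i, Submodule.sum_mem _ (fun i hi => W.smul_mem _ (hu i hi)), ?_⟩
  intro j hj
  rw [Finset.sum_apply]
  have hterm : ∀ i ∈ I, (c i • u i) j = if j = i then c i else 0 := by
    intro i hi
    rw [Pi.smul_apply, hud i hi j hj, smul_eq_mul, mul_ite, mul_one, mul_zero]
  rw [Finset.sum_congr rfl hterm, Finset.sum_ite_eq I j c, if_pos hj]

/-- Every Lagrangian subspace `L` of `ℝ^{2n}` is a graph over the
coordinate Lagrangian subspace spanned by `{xᵢ : i ∈ I} ∪ {ξⱼ : j ∈ J}` for some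
partition `{1,…,n} = I ⊔ J`: the projection of `L` onto that coordinate subspace is
bijective. Hence the charts `U_{I,J}` of symmetric matrices cover the Lagrangian
Grassmannian `Λ(n)`. -/
theorem lagrangian_is_graph_over_some_chart (n : ℕ)
    (L : Submodule ℝ ((Fin n ⊕ Fin n) → ℝ)) (hL : IsLagrangian n L) :
    ∃ I : Finset (Fin n),
      Function.Bijective (fun v : L => coordProj n I (v : (Fin n ⊕ Fin n) → ℝ)) := by
  classical
  obtain ⟨hdim, hiso⟩ := hL
  set W := L.map (LinearMap.funLeft ℝ ℝ (Sum.inl : Fin n → Fin n ⊕ Fin n)) with hW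
  obtain ⟨I, hinj, hsurj⟩ := exists_good_coords n W
  refine ⟨I, ?_⟩
  let f : L →ₗ[ℝ] (Fin n → ℝ) :=
    { toFun := fun v : L => coordProj n I (v : (Fin n ⊕ Fin n) → ℝ)
      map_add' := by
        intro a b
        funext i
        by_cases h : i ∈ I <;> simp [coordProj, h]
      map_smul' := by
        intro c a
        funext i
        by_cases h : i ∈ I <;> simp [coordProj, h] }
  have key : ∀ v : L, f v = 0 → v = 0 := by
    intro v hv
    have hvL : (v : (Fin n ⊕ Fin n) → ℝ) ∈ L := v.2
    have hcoord : ∀ i : Fin n,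
        (if i ∈ I then (v : (Fin n ⊕ Fin n) → ℝ) (Sum.inl i)
          else (v : (Fin n ⊕ Fin n) → ℝ) (Sum.inr i)) = 0 := fun i => congrFun hv i
    have hx0 : ∀ i ∈ I, (v : (Fin n ⊕ Fin n) → ℝ) (Sum.inl i) = 0 := by
      intro i hi; simpa [hi] using hcoord i
    have hxi0 : ∀ i ∉ I, (v : (Fin n ⊕ Fin n) → ℝ) (Sum.inr i) = 0 := by
      intro i hi; simpa [hi] using hcoord i
    have hxW : (fun i => (v : (Fin n ⊕ Fin n) → ℝ) (Sum.inl i)) ∈ W :=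
      ⟨(v : (Fin n ⊕ Fin n) → ℝ), hvL, rfl⟩
    have hxall : ∀ i, (v : (Fin n ⊕ Fin n) → ℝ) (Sum.inl i) = 0 := by
      have h0 := hinj _ hxW (fun i hi => hx0 i hi)
      intro i; exact congrFun h0 i
    obtain ⟨uu, huW, huI⟩ := hsurj (fun i => (v : (Fin n ⊕ Fin n) → ℝ) (Sum.inr i))
    obtain ⟨w, hwL, hwu⟩ := huW
    have hsymp := hiso _ hvL _ hwL
    unfold sympForm at hsymp
    have hterm : ∀ i : Fin n,
        (v : (Fin n ⊕ Fin n) → ℝ) (Sum.inr i) * w (Sum.inl i)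
          - (v : (Fin n ⊕ Fin n) → ℝ) (Sum.inl i) * w (Sum.inr i)
        = ((v : (Fin n ⊕ Fin n) → ℝ) (Sum.inr i)) ^ 2 := by
      intro i
      rw [hxall i, zero_mul, sub_zero]
      by_cases hi : i ∈ I
      · have h1 : w (Sum.inl i) = (v : (Fin n ⊕ Fin n) → ℝ) (Sum.inr i) := by
          have h2 : uu i = (v : (Fin n ⊕ Fin n) → ℝ) (Sum.inr i) := huI i hi
          have h3 : uu i = w (Sum.inl i) := by
            rw [← hwu]; rfl
          rw [← h3, h2]
        rw [h1]; ring
      · rw [hxi0 i hi]; ring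
    rw [Finset.sum_congr rfl (fun i _ => hterm i)] at hsymp
    have hz : ∀ i : Fin n, (v : (Fin n ⊕ Fin n) → ℝ) (Sum.inr i) = 0 := by
      intro i
      have := (Finset.sum_eq_zero_iff_of_nonneg (fun i _ => sq_nonneg _)).mp hsymp i
        (Finset.mem_univ i)
      exact sq_eq_zero_iff.mp this
    apply Subtype.ext
    funext j
    cases j with
    | inl i => exact hxall i
    | inr i => exact hz i
  have hfinj : Function.Injective f :=
    LinearMap.ker_eq_bot.mp (LinearMap.ker_eq_bot'.mpr key)
  have hrange : LinearMap.range f = ⊤ := by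
    apply Submodule.eq_top_of_finrank_eq
    rw [LinearMap.finrank_range_of_inj hfinj, hdim, Module.finrank_fin_fun]
  exact ⟨hfinj, LinearMap.range_eq_top.mp hrange⟩
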